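/- Let p, q be co-prime positive integers and ℓ ∈ ℕ. For every f ∈ L²(0,2π) and every j ∈ ℤ, the j-th Fourier coefficient of ℛ_ℓ(p,q)f satisfies ⟨ℛ_ℓ(p,q)f, e_j⟩ = e^{−i j^ℓ 2πp/q} f̂(j). -/

import Mathlib

noncomputable section

open MeasureTheory Filter Finset Complex

/-! Basic framework: we represent elements of `L²(0,2π)` by functions `ℝ → ℂ`,
with the measure `μ2 = volume.restrict (Ioc 0 (2π))`; equality "as elements of
`L²(0,2π)`" is a.e. equality w.r.t. `μ2`, and `L²`-convergent series over `ℤ` are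
expressed by `L2HasSum` (unconditional convergence of partial sums in the
`L²(0,2π)` seminorm). -/

/-- The measure representing `L²(0,2π)`. -/
def μ2 : MeasureTheory.Measure ℝ := MeasureTheory.volume.restrict (Set.Ioc 0 (2 * Real.pi))

/-- The `2π`-periodic extension `f*`: `f*(x) = f(x - 2πm)` for `2πm ≤ x < 2π(m+1)`. -/
def pext (f : ℝ → ℂ) (x : ℝ) : ℂ := f (x - 2 * Real.pi * (⌊x / (2 * Real.pi)⌋ : ℝ))

/-- The periodic translation operator `(𝒯ₛ f)(x) = f*(x - s)`. -/
def transl (s : ℝ) (f : ℝ → ℂ) (x : ℝ) : ℂ := pext f (x - s)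

/-- The exponential basis functions `e_m(x) = e^{imx}/√(2π)`. -/
def eM (m : ℤ) (x : ℝ) : ℂ :=
  Complex.exp (Complex.I * (m : ℂ) * (x : ℂ)) / (Real.sqrt (2 * Real.pi) : ℂ)

/-- The Fourier coefficient `f̂(m) = ∫₀^{2π} f(x) e^{-imx}/√(2π) dx`. -/
def fc (f : ℝ → ℂ) (m : ℤ) : ℂ :=
  ∫ x in Set.Ioc (0 : ℝ) (2 * Real.pi),
    f x * Complex.exp (-(Complex.I * (m : ℂ) * (x : ℂ))) / (Real.sqrt (2 * Real.pi) : ℂ)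

/-- `G^{(ℓ)}_{p,q}(k) = Σ_{m=0}^{q-1} e^{-i m^ℓ 2πp/q} e_m(2πk/q)`. -/
def G (l p q k : ℕ) : ℂ :=
  ∑ m ∈ Finset.range q,
    Complex.exp (-(Complex.I * (m : ℂ) ^ l * ((2 * Real.pi * p / q : ℝ) : ℂ))) *
      eM (m : ℤ) (2 * Real.pi * k / q)

/-- The periodic revival operator `ℛ_ℓ(p,q) f = (√(2π)/q) Σ_{k=0}^{q-1} G^{(ℓ)}_{p,q}(k) 𝒯_{2πk/q} f`. -/
def Rop (l p q : ℕ) (f : ℝ → ℂ) (x : ℝ) : ℂ :=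
  ((Real.sqrt (2 * Real.pi) : ℂ) / (q : ℂ)) *
    ∑ k ∈ Finset.range q, G l p q k * transl (2 * Real.pi * k / q) f x

/-- The family `F : ℤ → (ℝ → ℂ)` sums (unconditionally, in the `L²(0,2π)` norm) to `f`. -/
def L2HasSum (F : ℤ → ℝ → ℂ) (f : ℝ → ℂ) : Prop :=
  Filter.Tendsto
    (fun s : Finset ℤ => MeasureTheory.eLpNorm (fun x => (∑ m ∈ s, F m x) - f x) 2 μ2)
    Filter.atTop (nhds 0)

/-! Translating `f` by `s` multiplies its `j`-th Fourier coefficient by `e^{-ijs}`: the integrand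
`f*(x - s) conj (e_j x)` is `2π`-periodic, so the window of integration may be shifted back to
`(0, 2π]`. Hence `⟨ℛ_ℓ(p,q) f, e_j⟩ = (√(2π)/q) Σ_k G(k) e^{-2πijk/q} f̂(j)`, and with
`ζ = e^{2πi/q}` the sum over `k` is a discrete Fourier inversion on `ℤ/qℤ`: only the term
`m ≡ j (mod q)` of `G` survives, and `m^ℓ ≡ j^ℓ (mod q)` turns its phase into `e^{-ij^ℓ 2πp/q}`. -/

open Function Set

namespace IsPrimitiveRoot

variable {K : Type*} [Field K] {ζ : K} {q : ℕ}

theorem geom_sum_zpow_eq_ite (hζ : IsPrimitiveRoot ζ q) (n : ℤ) :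
    ∑ k ∈ range q, (ζ ^ n) ^ k = if (q : ℤ) ∣ n then (q : K) else 0 := by
  split_ifs with hn
  · simp [(hζ.zpow_eq_one_iff_dvd n).2 hn]
  · have hq : (ζ ^ n) ^ q = 1 := by
      rw [← zpow_natCast, ← zpow_mul, mul_comm, zpow_mul, zpow_natCast, hζ.pow_eq_one, one_zpow]
    rw [geom_sum_eq (mt (hζ.zpow_eq_one_iff_dvd n).1 hn), hq, sub_self, zero_div]

theorem zpow_eq_zpow_of_modEq (hζ : IsPrimitiveRoot ζ q) (hq : q ≠ 0) {a b : ℤ}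
    (h : a ≡ b [ZMOD q]) : ζ ^ a = ζ ^ b := by
  rw [← sub_add_cancel a b, zpow_add₀ (hζ.ne_zero hq), (hζ.zpow_eq_one_iff_dvd _).2 h.symm.dvd,
    one_mul]

theorem sum_mul_geom_sum_zpow_sub (hζ : IsPrimitiveRoot ζ q) (c : ℤ → K)
    (hc : ∀ a b, a ≡ b [ZMOD q] → c a = c b) (j : ℤ) :
    ∑ m ∈ range q, c m * ∑ k ∈ range q, (ζ ^ ((m : ℤ) - j)) ^ k = q * c j := by
  rcases Nat.eq_zero_or_pos q with rfl | hq
  · simp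
  simp_rw [hζ.geom_sum_zpow_eq_ite, mul_ite, mul_zero]
  have hj : 0 ≤ j % q := Int.emod_nonneg j (by omega)
  have hm₀ : (j % q).toNat < q := by have := Int.emod_lt_of_pos j (by omega : (0 : ℤ) < q); omega
  have hdvd : ∀ m ∈ range q, (q : ℤ) ∣ (m : ℤ) - j ↔ m = (j % q).toNat := by
    intro m hm
    rw [← Int.modEq_iff_dvd, Int.ModEq,
      Int.emod_eq_of_lt (Int.natCast_nonneg m) (by simpa using mem_range.1 hm)]
    omega
  rw [sum_eq_single_of_mem _ (mem_range.2 hm₀) fun m hm hne => if_neg (mt (hdvd m hm).1 hne),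
    if_pos ((hdvd _ (mem_range.2 hm₀)).2 rfl), mul_comm,
    hc _ j (by rw [Int.toNat_of_nonneg hj]; exact Int.mod_modEq j q)]

end IsPrimitiveRoot

theorem sum_G_mul_cexp (l p q : ℕ) (hq : q ≠ 0) (j : ℤ) :
    ∑ k ∈ range q, G l p q k * cexp (-(I * j * ((2 * Real.pi * k / q : ℝ) : ℂ))) =
      q / (Real.sqrt (2 * Real.pi) : ℂ) *
        cexp (-(I * (j : ℂ) ^ l * ((2 * Real.pi * p / q : ℝ) : ℂ))) := by
  set ζ := cexp (2 * Real.pi * I / q)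
  have hζ : IsPrimitiveRoot ζ q := isPrimitiveRoot_exp q hq
  have hexp : ∀ n : ℤ, ζ ^ n = cexp (n * (2 * Real.pi * I / q)) := fun n => (exp_int_mul _ n).symm
  have hcoeff : ∀ m : ℤ,
      cexp (-(I * (m : ℂ) ^ l * ((2 * Real.pi * p / q : ℝ) : ℂ))) = ζ ^ (-(m ^ l * p)) := by
    intro m
    rw [hexp]
    push_cast
    ring_nf
  have hterm : ∀ k m : ℕ, cexp (-(I * (m : ℂ) ^ l * ((2 * Real.pi * p / q : ℝ) : ℂ))) *
      eM m (2 * Real.pi * k / q) * cexp (-(I * j * ((2 * Real.pi * k / q : ℝ) : ℂ))) =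
      ζ ^ (-((m : ℤ) ^ l * p)) / (Real.sqrt (2 * Real.pi) : ℂ) * (ζ ^ ((m : ℤ) - j)) ^ k := by
    intro k m
    rw [← hcoeff, ← zpow_natCast (ζ ^ _), ← zpow_mul, hexp, eM]
    have hchar : cexp (I * m * ((2 * Real.pi * k / q : ℝ) : ℂ)) *
        cexp (-(I * j * ((2 * Real.pi * k / q : ℝ) : ℂ))) =
        cexp (((m - j) * k : ℤ) * (2 * Real.pi * I / q)) := by
      rw [← exp_add]
      push_cast
      ring_nf
    rw [← hchar]
    push_cast
    ring
  have hperiodic : ∀ a b, a ≡ b [ZMOD q] → ζ ^ (-(a ^ l * p)) / (Real.sqrt (2 * Real.pi) : ℂ) =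
      ζ ^ (-(b ^ l * p)) / (Real.sqrt (2 * Real.pi) : ℂ) := fun a b h => by
    rw [hζ.zpow_eq_zpow_of_modEq hq ((h.pow l).mul_right p).neg]
  simp_rw [G, sum_mul, hterm]
  rw [sum_comm]
  simp_rw [← mul_sum]
  rw [hζ.sum_mul_geom_sum_zpow_sub _ hperiodic, ← hcoeff]
  ring

theorem pext_apply (f : ℝ → ℂ) (x : ℝ) : pext f x = f (toIcoMod Real.two_pi_pos 0 x) := by
  rw [pext, toIcoMod, toIcoDiv_eq_floor, sub_zero, zsmul_eq_mul, mul_comm]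

theorem periodic_pext (f : ℝ → ℂ) : Periodic (pext f) (2 * Real.pi) := fun x => by
  simp only [pext_apply, toIcoMod_add_right]

theorem pext_eq_self (f : ℝ → ℂ) {x : ℝ} (hx : x ∈ Ico 0 (2 * Real.pi)) : pext f x = f x := by
  rw [pext_apply, (toIcoMod_eq_self _).2 (by simpa using hx)]

theorem pext_ae_eq (f : ℝ → ℂ) : pext f =ᵐ[volume.restrict (Ioc 0 (2 * Real.pi))] f := by
  rw [← Measure.restrict_congr_set Ico_ae_eq_Ioc]
  exact ae_restrict_of_forall_mem measurableSet_Ico fun x hx => pext_eq_self f hx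

theorem intervalIntegrable_pext {f : ℝ → ℂ} (hf : IntegrableOn f (Ioc 0 (2 * Real.pi))) (a b : ℝ) :
    IntervalIntegrable (pext f) volume a b := by
  refine (periodic_pext f).intervalIntegrable₀ Real.two_pi_pos.ne' ?_ a b
  rw [intervalIntegrable_iff_integrableOn_Ioc_of_le Real.two_pi_pos.le]
  exact hf.congr_fun_ae (pext_ae_eq f).symm

theorem setIntegral_transl_mul (f φ : ℝ → ℂ) (hφ : Periodic φ (2 * Real.pi)) (s : ℝ) :
    ∫ x in Ioc 0 (2 * Real.pi), transl s f x * φ x =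
      ∫ x in Ioc 0 (2 * Real.pi), f x * φ (x + s) := by
  have hper : Periodic (fun y => pext f y * φ (y + s)) (2 * Real.pi) :=
    (periodic_pext f).mul (hφ.add_const s)
  calc ∫ x in Ioc 0 (2 * Real.pi), transl s f x * φ x
      = ∫ x in (0 : ℝ)..2 * Real.pi, pext f (x - s) * φ (x - s + s) := by
        simp [intervalIntegral.integral_of_le Real.two_pi_pos.le, transl]
    _ = ∫ y in -s..-s + 2 * Real.pi, pext f y * φ (y + s) := by
        rw [intervalIntegral.integral_comp_sub_right (fun y => pext f y * φ (y + s))]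
        ring_nf
    _ = ∫ y in (0 : ℝ)..0 + 2 * Real.pi, pext f y * φ (y + s) := hper.intervalIntegral_add_eq _ _
    _ = ∫ x in Ioc 0 (2 * Real.pi), f x * φ (x + s) := by
        rw [zero_add, intervalIntegral.integral_of_le Real.two_pi_pos.le]
        exact integral_congr_ae ((pext_ae_eq f).mul (ae_of_all _ fun _ => rfl))

theorem starRingEnd_eM (j : ℤ) (x : ℝ) :
    starRingEnd ℂ (eM j x) = cexp (-(I * j * x)) / (Real.sqrt (2 * Real.pi) : ℂ) := by
  rw [eM, map_div₀, ← exp_conj, conj_ofReal]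
  simp [map_mul, conj_I]

theorem starRingEnd_eM_add (j : ℤ) (x s : ℝ) :
    starRingEnd ℂ (eM j (x + s)) = cexp (-(I * j * s)) * starRingEnd ℂ (eM j x) := by
  rw [starRingEnd_eM, starRingEnd_eM, mul_div_assoc', ← exp_add]
  push_cast
  ring_nf

theorem periodic_starRingEnd_eM (j : ℤ) :
    Periodic (fun x => starRingEnd ℂ (eM j x)) (2 * Real.pi) := fun x => by
  have h : cexp (-(I * j * ((2 * Real.pi : ℝ) : ℂ))) = 1 := by
    rw [← exp_int_mul_two_pi_mul_I (-j)]
    push_cast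
    ring_nf
  simp only [starRingEnd_eM_add, h, one_mul]

theorem fc_eq_setIntegral (f : ℝ → ℂ) (j : ℤ) :
    fc f j = ∫ x in Ioc 0 (2 * Real.pi), f x * starRingEnd ℂ (eM j x) := by
  simp only [fc, starRingEnd_eM, mul_div_assoc]

theorem setIntegral_transl_mul_starRingEnd_eM (f : ℝ → ℂ) (j : ℤ) (s : ℝ) :
    ∫ x in Ioc 0 (2 * Real.pi), transl s f x * starRingEnd ℂ (eM j x) =
      cexp (-(I * j * s)) * fc f j := by
  rw [setIntegral_transl_mul f _ (periodic_starRingEnd_eM j), fc_eq_setIntegral,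
    ← integral_const_mul]
  simp only [starRingEnd_eM_add]
  congr 1 with x
  ring

theorem integrableOn_transl_mul_starRingEnd_eM {f : ℝ → ℂ}
    (hf : IntegrableOn f (Ioc 0 (2 * Real.pi))) (j : ℤ) (s : ℝ) :
    IntegrableOn (fun x => transl s f x * starRingEnd ℂ (eM j x)) (Ioc 0 (2 * Real.pi)) := by
  rw [← intervalIntegrable_iff_integrableOn_Ioc_of_le Real.two_pi_pos.le]
  have htransl : IntervalIntegrable (fun x => pext f (x - s)) volume 0 (2 * Real.pi) := by
    simpa using (intervalIntegrable_pext hf (-s) (2 * Real.pi - s)).comp_sub_right s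
  exact htransl.mul_continuousOn (by unfold eM; fun_prop)

theorem statement3_general (p q : ℕ) (hq : 0 < q) (l : ℕ)
    (f : ℝ → ℂ) (hf : MeasureTheory.MemLp f 2 μ2) (j : ℤ) :
    (∫ x in Set.Ioc (0 : ℝ) (2 * Real.pi), Rop l p q f x * (starRingEnd ℂ) (eM j x)) =
      Complex.exp (-(Complex.I * (j : ℂ) ^ l * ((2 * Real.pi * p / q : ℝ) : ℂ))) * fc f j := by
  -- `μ2` is unfolded so that its `IsFiniteMeasure` instance is found
  have hfi : IntegrableOn f (Ioc 0 (2 * Real.pi)) :=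
    (show MemLp f 2 (volume.restrict (Ioc 0 (2 * Real.pi))) from hf).integrable one_le_two
  have hc : (Real.sqrt (2 * Real.pi) : ℂ) ≠ 0 :=
    ofReal_ne_zero.2 (Real.sqrt_pos.2 Real.two_pi_pos).ne'
  calc ∫ x in Ioc 0 (2 * Real.pi), Rop l p q f x * starRingEnd ℂ (eM j x)
      = ∫ x in Ioc 0 (2 * Real.pi), ∑ k ∈ range q, Real.sqrt (2 * Real.pi) / q * G l p q k *
          (transl (2 * Real.pi * k / q) f x * starRingEnd ℂ (eM j x)) := by
        simp only [Rop, mul_sum, sum_mul, mul_assoc]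
    _ = ∑ k ∈ range q, Real.sqrt (2 * Real.pi) / q * G l p q k *
          (cexp (-(I * j * ((2 * Real.pi * k / q : ℝ) : ℂ))) * fc f j) := by
        rw [integral_finsetSum _ fun k _ =>
          (integrableOn_transl_mul_starRingEnd_eM hfi j _).const_mul _]
        simp only [integral_const_mul, setIntegral_transl_mul_starRingEnd_eM]
    _ = Real.sqrt (2 * Real.pi) / q *
          (∑ k ∈ range q, G l p q k * cexp (-(I * j * ((2 * Real.pi * k / q : ℝ) : ℂ)))) *
          fc f j := by
        simp only [mul_sum, sum_mul, mul_assoc]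
    _ = _ := by
        have hq' : (q : ℂ) ≠ 0 := Nat.cast_ne_zero.2 hq.ne'
        rw [sum_G_mul_cexp l p q hq.ne' j]
        field_simp

/-- Lemma 2.3, Fourier coefficients of the revival operator: for co-prime
positive `p, q`, `ℓ ∈ ℕ`, `f ∈ L²(0,2π)` and `j ∈ ℤ`,
`⟨ℛ_ℓ(p,q)f, e_j⟩ = e^{-ij^ℓ 2πp/q} f̂(j)`. -/
theorem statement3 (p q : ℕ) (hp : 0 < p) (hq : 0 < q) (hpq : Nat.Coprime p q) (l : ℕ)
    (f : ℝ → ℂ) (hf : MeasureTheory.MemLp f 2 μ2) (j : ℤ) :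
    (∫ x in Set.Ioc (0 : ℝ) (2 * Real.pi), Rop l p q f x * (starRingEnd ℂ) (eM j x)) =
      Complex.exp (-(Complex.I * (j : ℂ) ^ l * ((2 * Real.pi * p / q : ℝ) : ℂ))) * fc f j :=
  statement3_general p q hq l f hf j
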